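/- arXiv:1209.2875 — 2 statements merged into one kernel-verified Lean document; each statement's English description precedes it below -/
import Mathlib

section
/- For every infinite binary sequence x and every k ∈ ℕ there exists n ∈ ℕ such that C(x[n]) < n - k, where x[n] denotes the first n bits of x. In particular, no infinite binary sequence has all but finitely many of its initial segments incompressible with respect to plain complexity. -/
open MeasureTheory
open scoped ENNReal

/-- The length-`n` initial segment of an infinite binary sequence. -/
def pref (x : ℕ → Bool) (n : ℕ) : List Bool := List.ofFn (fun i : Fin n => x i)

/-- A set of binary strings is prefix-free if no member is a proper prefix of another. -/
def PFree (S : Set (List Bool)) : Prop := ∀ a ∈ S, ∀ b ∈ S, a <+: b → a = b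

/-- Kolmogorov complexity of `b` relative to machine `M`: the least length of an
input mapped by `M` to `b`, `∞` if there is none. -/
noncomputable def Cpx (M : List Bool →. List Bool) (b : List Bool) : ℕ∞ :=
  sInf {n : ℕ∞ | ∃ p : List Bool, b ∈ M p ∧ (p.length : ℕ∞) = n}

/-- A universal machine for plain complexity. -/
def Universal (U : List Bool →. List Bool) : Prop :=
  Partrec U ∧ ∀ L : List Bool →. List Bool, Partrec L →
    ∃ k : ℕ, ∀ b : List Bool, Cpx U b ≤ Cpx L b + (k : ℕ∞)

/-- A prefix-free universal machine: prefix-free domain, universal among machines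
with prefix-free domain. -/
def PFUniversal (V : List Bool →. List Bool) : Prop :=
  Partrec V ∧ PFree {p | (V p).Dom} ∧
    ∀ L : List Bool →. List Bool, Partrec L → PFree {p | (L p).Dom} →
      ∃ k : ℕ, ∀ b : List Bool, Cpx V b ≤ Cpx L b + (k : ℕ∞)

/-- `cyl S` is the set of infinite binary sequences extending some member of `S`. -/
def cyl (S : Set (List Bool)) : Set (ℕ → Bool) := {x | ∃ b ∈ S, pref x b.length = b}

/-- The `e`-th computably enumerable set of binary strings. -/
def W (e : ℕ) : Set (List Bool) :=
  {b | ((Denumerable.ofNat Nat.Partrec.Code e).eval (Encodable.encode b)).Dom}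

/-- The binary-digit expansion of a real number. -/
noncomputable def binSeq (r : ℝ) : ℕ → Bool := fun n => decide (⌊r * 2 ^ (n + 1)⌋ % 2 = 1)

/-- The fair-coin (uniform product) measure on Cantor space, as the pushforward of
Lebesgue measure on `(0,1]` under binary expansion. -/
noncomputable def coin : Measure (ℕ → Bool) :=
  Measure.map binSeq (volume.restrict (Set.Ioc (0 : ℝ) 1))

/-- Martin-Löf test in sense 2. -/
def MLTest (f : ℕ → ℕ) : Prop :=
  Computable f ∧ ∀ n : ℕ, coin (cyl (W (f n))) ≤ (2 : ℝ≥0∞)⁻¹ ^ n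

/-- `x` fails the sense-2 test `f`. -/
def Fails (x : ℕ → Bool) (f : ℕ → ℕ) : Prop := ∀ n : ℕ, x ∈ cyl (W (f n))

/-- Martin-Löf randomness (sense 2). -/
def MLRandom (x : ℕ → Bool) : Prop := ∀ f : ℕ → ℕ, MLTest f → ¬ Fails x f

/-- The dyadic rational value of a finite binary string. -/
noncomputable def sval (b : List Bool) : ℝ :=
  ∑ i : Fin b.length, if b.get i then ((2 : ℝ))⁻¹ ^ (i.val + 1) else 0

/-- Chaitin's halting probability of machine `V`. -/
noncomputable def Omega (V : List Bool →. List Bool) : ℝ :=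
  ∑' p : {p : List Bool // (V p).Dom}, ((2 : ℝ))⁻¹ ^ (p.val.length)

/-- Martin-Löf test in sense 1. -/
def MLTest1 (t : List Bool →. ℕ) : Prop :=
  Partrec t ∧ ∀ m : ℕ, coin (cyl {b | ∃ v ∈ t b, m ≤ v}) ≤ (2 : ℝ≥0∞)⁻¹ ^ m

/-- `x` passes the sense-1 test `t`: the values of `t` on `x`'s prefixes are bounded. -/
def Passes1 (x : ℕ → Bool) (t : List Bool →. ℕ) : Prop :=
  ∃ B : ℕ, ∀ (n : ℕ) (v : ℕ), v ∈ t (pref x n) → v ≤ B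

/-- A set of binary strings is computably enumerable. -/
def CE (S : Set (List Bool)) : Prop :=
  ∃ f : List Bool →. ℕ, Partrec f ∧ S = {b | (f b).Dom}

/-!
The length of a program can itself carry information. Let `M` be the machine that, on input
`q`, decodes the number `|q|` as a string `w` and outputs `w ++ q`. Given `x` and a prefix
`w = x[m]`, put `N = code(w)` and `n = m + N`: then `x[n] = w ++ q` with `|q| = N`, so
`C(x[n]) ≤ N + c = n - m + c`, where `c` is the invariance constant of `M`. Taking
`m = k + c + 1` gives `C(x[n]) < n - k`.
-/

theorem Cpx_le_length {M : List Bool →. List Bool} {b p : List Bool} (h : b ∈ M p) :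
    Cpx M b ≤ p.length :=
  sInf_le ⟨p, h, rfl⟩

theorem Universal.exists_cpx_comp_le {U : List Bool →. List Bool} (hU : Universal U)
    {f : List Bool → List Bool} (hf : Computable f) :
    ∃ c : ℕ, ∀ p : List Bool, Cpx U (f p) ≤ p.length + c := by
  obtain ⟨c, hc⟩ := hU.2 (fun p => Part.some (f p)) hf.partrec
  refine ⟨c, fun p => (hc (f p)).trans ?_⟩
  gcongr
  exact Cpx_le_length (Part.mem_some _)

/-- The machine that reads the length of its input as the code of a string to prepend. -/
def prependDecodedLength (q : List Bool) : List Bool :=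
  ((Encodable.decode q.length).getD [] : List Bool) ++ q

theorem computable_prependDecodedLength : Computable prependDecodedLength :=
  (Primrec.list_append.comp
    (Primrec.option_getD.comp (Primrec.decode.comp Primrec.list_length) (Primrec.const []))
    Primrec.id).to_comp

theorem prependDecodedLength_of_length_eq_encode {w q : List Bool}
    (hq : q.length = Encodable.encode w) : prependDecodedLength q = w ++ q := by
  simp [prependDecodedLength, hq]

theorem pref_add (x : ℕ → Bool) (m n : ℕ) :
    pref x (m + n) = pref x m ++ List.ofFn (fun i : Fin n => x (m + i)) := by
  simp only [pref, List.ofFn_add]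
  rfl

theorem Universal.exists_cpx_pref_add_encode_le {U : List Bool →. List Bool} (hU : Universal U) :
    ∃ c : ℕ, ∀ (x : ℕ → Bool) (m : ℕ),
      Cpx U (pref x (m + Encodable.encode (pref x m))) ≤ Encodable.encode (pref x m) + c := by
  obtain ⟨c, hc⟩ := hU.exists_cpx_comp_le computable_prependDecodedLength
  refine ⟨c, fun x m => ?_⟩
  set q := List.ofFn (fun i : Fin (Encodable.encode (pref x m)) => x (m + i))
  have hq : q.length = Encodable.encode (pref x m) := List.length_ofFn
  rw [pref_add, ← prependDecodedLength_of_length_eq_encode hq, ← hq]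
  exact hc q

/-- Every infinite binary sequence has initial segments of arbitrarily large
compressibility: for all `x` and `k` there is `n` with `C(x[n]) < n - k`.
Hence no real is incompressible almost always. -/
theorem stmt5 (U : List Bool →. List Bool) (hU : Universal U)
    (x : ℕ → Bool) (k : ℕ) :
    ∃ n : ℕ, Cpx U (pref x n) + (k : ℕ∞) < (n : ℕ∞) := by
  obtain ⟨c, hc⟩ := hU.exists_cpx_pref_add_encode_le
  set m := k + c + 1
  set N := Encodable.encode (pref x m)
  refine ⟨m + N, ?_⟩
  calc Cpx U (pref x (m + N)) + k ≤ (N + c : ℕ∞) + k := by gcongr; exact hc x m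
    _ = ((N + c + k : ℕ) : ℕ∞) := by push_cast; rfl
    _ < ((m + N : ℕ) : ℕ∞) := by exact_mod_cast (by omega)
end

section
/- There exists a universal Martin-Löf test: a total computable f : ℕ → ℕ with Pr(O(W_{f(n)})) ≤ 2^{-n} for all n, such that every infinite binary sequence failing any Martin-Löf test (in sense 2) lies in ⋂_n O(W_{f(n)}). -/
open MeasureTheory
open scoped ENNReal

/-!
Under binary expansion the cylinder of `d :: b` is the preimage of the cylinder of `b` under
`r ↦ 2 r - d`, which halves Lebesgue measure; hence `coin (cyl {b}) = 2⁻¹ ^ |b|`. Refining a finite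
list of strings to all extensions of one common length turns the bound
`coin (cyl L) ≤ 2⁻¹ ^ m` into a count, so it is decidable.

Trimming the `e`-th candidate at level `m` keeps only the stages of the enumeration of `W e` that
pass this test: the result always has measure at most `2⁻¹ ^ m`, and it is all of `W e` when `W e`
already satisfies the bound. Level `n` of the universal test is the union over `e` of the `e`-th
candidate's level `e + n + 1`, trimmed: its measure is at most `∑ₑ 2⁻¹ ^ (e + n + 1) = 2⁻¹ ^ n`,
and it contains level `e + n + 1` of every genuine test with code `e`.
-/

open Set

lemma pref_length (x : ℕ → Bool) (n : ℕ) : (pref x n).length = n := by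
  simp [pref]

lemma pref_succ (x : ℕ → Bool) (n : ℕ) : pref x (n + 1) = x 0 :: pref (fun j => x (j + 1)) n := by
  simp [pref, List.ofFn_succ]

lemma prefix_pref_iff {x : ℕ → Bool} {b : List Bool} {n : ℕ} (h : b.length ≤ n) :
    b <+: pref x n ↔ pref x b.length = b := by
  have htake : pref x b.length = (pref x n).take b.length :=
    List.ext_getElem (by simp [pref, h]) fun i _ _ => by simp [pref]
  rw [List.prefix_iff_eq_take, htake, eq_comm]

lemma mem_cyl_singleton {x : ℕ → Bool} {b : List Bool} : x ∈ cyl {b} ↔ pref x b.length = b := by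
  simp [cyl]

lemma cyl_singleton_eq_iInter (b : List Bool) :
    cyl {b} = ⋂ i : Fin b.length, (fun x => x i) ⁻¹' {b[i]} := by
  ext x
  simp [mem_cyl_singleton, pref, List.ext_getElem_iff, Fin.forall_iff]

lemma cyl_eq_biUnion (S : Set (List Bool)) : cyl S = ⋃ b ∈ S, cyl {b} := by
  ext x
  simp [cyl]

lemma cyl_iUnion {ι : Sort*} (S : ι → Set (List Bool)) : cyl (⋃ i, S i) = ⋃ i, cyl (S i) := by
  ext x
  simp only [cyl, mem_iUnion, mem_ofPred_eq]
  tauto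

lemma cyl_mono {S T : Set (List Bool)} (h : S ⊆ T) : cyl S ⊆ cyl T :=
  fun _ ⟨b, hb, hx⟩ => ⟨b, h hb, hx⟩

lemma mem_cyl_of_length_eq {S : Set (List Bool)} {D : ℕ} (hS : ∀ s ∈ S, s.length = D)
    {x : ℕ → Bool} : x ∈ cyl S ↔ pref x D ∈ S := by
  constructor
  · rintro ⟨s, hs, hx⟩
    rwa [← hS s hs, hx]
  · exact fun hx => ⟨pref x D, hx, by rw [pref_length]⟩

lemma measurableSet_cyl_singleton (b : List Bool) : MeasurableSet (cyl {b}) := by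
  rw [cyl_singleton_eq_iInter]
  exact .iInter fun i => measurable_pi_apply _ (measurableSet_singleton _)

lemma measurable_binSeq : Measurable binSeq :=
  measurable_pi_lambda _ fun _ =>
    (measurable_from_top (f := fun k : ℤ => decide (k % 2 = 1))).comp
      (Int.measurable_floor.comp (measurable_id.mul_const _))

lemma binSeq_two_mul_sub (r : ℝ) (k : ℤ) (j : ℕ) : binSeq (2 * r - k) j = binSeq r (j + 1) := by
  have h : (2 * r - k) * 2 ^ (j + 1) = r * 2 ^ (j + 1 + 1) - ((k * 2 ^ j * 2 : ℤ) : ℝ) := by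
    push_cast; ring
  simp only [binSeq, h, Int.floor_sub_intCast, Int.sub_mul_emod_self_right]

lemma two_mul_sub_mem_Ico_iff (r : ℝ) (d : Bool) :
    2 * r - d.toNat ∈ Ico (0 : ℝ) 1 ↔ r ∈ Ico 0 1 ∧ binSeq r 0 = d := by
  have hfloor : 2 * r - d.toNat ∈ Ico (0 : ℝ) 1 ↔ ⌊r * 2⌋ = d.toNat := by
    rw [Int.floor_eq_iff, mem_Ico]
    push_cast
    constructor <;> rintro ⟨h₁, h₂⟩ <;> constructor <;> linarith
  have hd : (d.toNat : ℝ) ≤ 1 := by exact_mod_cast Bool.toNat_le d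
  have hdigit : binSeq r 0 = decide (⌊r * 2⌋ % 2 = 1) := by simp [binSeq]
  rw [hdigit]
  constructor
  · intro h
    refine ⟨⟨by linarith [h.1, (d.toNat.cast_nonneg : (0 : ℝ) ≤ d.toNat)], by linarith [h.2]⟩, ?_⟩
    rw [hfloor.1 h]
    cases d <;> decide
  · rintro ⟨⟨h₀, h₁⟩, hdig⟩
    have hlo : 0 ≤ ⌊r * 2⌋ := Int.floor_nonneg.2 (by positivity)
    have hhi : ⌊r * 2⌋ < 2 := Int.floor_lt.2 (by push_cast; linarith)
    apply hfloor.2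
    cases d <;> simp only [Bool.toNat_false, Bool.toNat_true, Nat.cast_zero, Nat.cast_one,
      decide_eq_false_iff_not, decide_eq_true_eq] at hdig ⊢ <;> omega

lemma binSeq_preimage_cyl_cons (d : Bool) (b : List Bool) :
    binSeq ⁻¹' cyl {d :: b} ∩ Ico 0 1 =
      (fun r : ℝ => 2 * r - d.toNat) ⁻¹' (binSeq ⁻¹' cyl {b} ∩ Ico 0 1) := by
  ext r
  have hshift : (fun j => binSeq r (j + 1)) = binSeq (2 * r - d.toNat) :=
    funext fun j => by rw [← binSeq_two_mul_sub r d.toNat, Int.cast_natCast]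
  simp only [mem_inter_iff, mem_preimage, mem_cyl_singleton, List.length_cons, pref_succ,
    List.cons.injEq, two_mul_sub_mem_Ico_iff, hshift]
  tauto

lemma volume_preimage_two_mul_sub (c : ℝ) (s : Set ℝ) :
    volume ((fun r => 2 * r - c) ⁻¹' s) = 2⁻¹ * volume s := by
  have : (fun r : ℝ => 2 * r - c) ⁻¹' s = (fun r => 2 * r) ⁻¹' ((fun r => r + -c) ⁻¹' s) := by
    ext; simp [sub_eq_add_neg]
  rw [this, Real.volume_preimage_mul_left two_ne_zero, measure_preimage_add_right,
    abs_of_pos (by norm_num), ENNReal.ofReal_inv_of_pos two_pos, ENNReal.ofReal_ofNat]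

lemma volume_binSeq_preimage_cyl (b : List Bool) :
    volume (binSeq ⁻¹' cyl {b} ∩ Ico 0 1) = 2⁻¹ ^ b.length := by
  induction b with
  | nil => simp [cyl, pref]
  | cons d b ih =>
    rw [binSeq_preimage_cyl_cons, volume_preimage_two_mul_sub, ih, List.length_cons, pow_succ']

lemma coin_cyl_singleton (b : List Bool) : coin (cyl {b}) = 2⁻¹ ^ b.length := by
  have hm := measurable_binSeq (measurableSet_cyl_singleton b)
  rw [coin, Measure.map_apply measurable_binSeq (measurableSet_cyl_singleton b),
    Measure.restrict_congr_set Ico_ae_eq_Ioc.symm, Measure.restrict_apply hm,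
    volume_binSeq_preimage_cyl]

lemma coin_cyl_of_length_eq {F : Finset (List Bool)} {D : ℕ} (hF : ∀ s ∈ F, s.length = D) :
    coin (cyl ↑F) = F.card * 2⁻¹ ^ D := by
  have hdisj : (F : Set (List Bool)).PairwiseDisjoint fun s => cyl {s} := by
    intro s hs t ht hne
    refine disjoint_left.2 fun x hxs hxt => hne ?_
    rw [mem_cyl_singleton, hF s hs] at hxs
    rw [mem_cyl_singleton, hF t ht] at hxt
    rw [← hxs, hxt]
  rw [cyl_eq_biUnion, Finset.set_biUnion_coe, measure_biUnion_finset hdisj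
    fun s _ => measurableSet_cyl_singleton s,
    Finset.sum_congr rfl fun s hs => by rw [coin_cyl_singleton, hF s hs], Finset.sum_const,
    nsmul_eq_mul]

def allStrings : ℕ → List (List Bool)
  | 0 => [[]]
  | n + 1 => (allStrings n).map (false :: ·) ++ (allStrings n).map (true :: ·)

lemma mem_allStrings {n : ℕ} {s : List Bool} : s ∈ allStrings n ↔ s.length = n := by
  induction n generalizing s with
  | zero => simp [allStrings]
  | succ n ih =>
    cases s with
    | nil => simp [allStrings]
    | cons d s => cases d <;> simp [allStrings, ih]

lemma nodup_allStrings (n : ℕ) : (allStrings n).Nodup := by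
  induction n with
  | zero => simp [allStrings]
  | succ n ih =>
    rw [allStrings, List.nodup_append]
    exact ⟨ih.map List.cons_injective, ih.map List.cons_injective, by simp⟩

def extensions (L : List (List Bool)) (D : ℕ) : List (List Bool) :=
  (allStrings D).filter fun s => ∃ b ∈ L, b <+: s

lemma mem_extensions {L : List (List Bool)} {D : ℕ} {s : List Bool} :
    s ∈ extensions L D ↔ s.length = D ∧ ∃ b ∈ L, b <+: s := by
  simp [extensions, mem_allStrings]

lemma nodup_extensions (L : List (List Bool)) (D : ℕ) : (extensions L D).Nodup :=
  (nodup_allStrings D).filter _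

lemma cyl_eq_cyl_extensions {L : List (List Bool)} {D : ℕ} (hD : ∀ b ∈ L, b.length ≤ D) :
    cyl {b | b ∈ L} = cyl ↑(extensions L D).toFinset := by
  ext x
  rw [mem_cyl_of_length_eq (S := ↑(extensions L D).toFinset)
    fun s hs => (mem_extensions.1 (List.mem_toFinset.1 hs)).1]
  simp only [Finset.mem_coe, List.mem_toFinset, mem_extensions, pref_length, true_and]
  constructor
  · rintro ⟨b, hb, hx⟩
    exact ⟨b, hb, (prefix_pref_iff (hD b hb)).2 hx⟩
  · rintro ⟨b, hb, hx⟩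
    exact ⟨b, hb, (prefix_pref_iff (hD b hb)).1 hx⟩

lemma coin_cyl_list {L : List (List Bool)} {D : ℕ} (hD : ∀ b ∈ L, b.length ≤ D) :
    coin (cyl {b | b ∈ L}) = (extensions L D).length * 2⁻¹ ^ D := by
  rw [cyl_eq_cyl_extensions hD, coin_cyl_of_length_eq,
    List.toFinset_card_of_nodup (nodup_extensions L D)]
  intro s hs
  exact (mem_extensions.1 (List.mem_toFinset.1 hs)).1

def lengthSum (L : List (List Bool)) : ℕ := (L.map List.length).sum

def Fits (m : ℕ) (L : List (List Bool)) : Prop :=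
  (extensions L (lengthSum L)).length * 2 ^ m ≤ 2 ^ lengthSum L

instance : DecidableRel Fits := fun _ _ => Nat.decLe _ _

lemma fits_iff {m : ℕ} {L : List (List Bool)} : Fits m L ↔ coin (cyl {b | b ∈ L}) ≤ 2⁻¹ ^ m := by
  have hD : ∀ b ∈ L, b.length ≤ lengthSum L := fun b hb =>
    List.le_sum_of_mem (List.mem_map_of_mem hb)
  rw [coin_cyl_list hD, ← ENNReal.inv_pow, ← ENNReal.inv_pow, ← div_eq_mul_inv,
    ENNReal.div_le_iff (pow_ne_zero _ two_ne_zero) (ENNReal.pow_ne_top ENNReal.ofNat_ne_top),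
    mul_comm, ← div_eq_mul_inv, ENNReal.le_div_iff_mul_le (by simp) (by simp), Fits]
  norm_cast

open Nat.Partrec (Code)
open Encodable Denumerable

/-- The strings enumerated into `W e` within `t` steps. -/
def stage (e t : ℕ) : List (List Bool) :=
  ((List.range t).filter fun k => (Code.evaln t (ofNat Code e) k).isSome).filterMap
    (decode₂ (List Bool))

lemma mem_stage {e t : ℕ} {b : List Bool} :
    b ∈ stage e t ↔ (Code.evaln t (ofNat Code e) (encode b)).isSome := by
  simp only [stage, List.mem_filterMap, List.mem_filter, List.mem_range, ← Option.mem_def,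
    mem_decode₂]
  constructor
  · rintro ⟨_, ⟨_, h⟩, rfl⟩
    exact h
  · intro h
    obtain ⟨v, hv⟩ := Option.isSome_iff_exists.1 h
    exact ⟨_, ⟨Code.evaln_bound hv, h⟩, rfl⟩

lemma stage_subset_stage {e t t' : ℕ} (h : t ≤ t') {b : List Bool} (hb : b ∈ stage e t) :
    b ∈ stage e t' := by
  rw [mem_stage, Option.isSome_iff_exists] at hb ⊢
  obtain ⟨v, hv⟩ := hb
  exact ⟨v, Code.evaln_mono h hv⟩

lemma mem_W_iff_exists_stage {e : ℕ} {b : List Bool} : b ∈ W e ↔ ∃ t, b ∈ stage e t := by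
  simp only [W, mem_ofPred_eq, mem_stage, Part.dom_iff_mem, Option.isSome_iff_exists,
    ← Option.mem_def, Code.evaln_complete]
  tauto

def trim (e m : ℕ) : Set (List Bool) := {b | ∃ t, Fits m (stage e t) ∧ b ∈ stage e t}

lemma coin_cyl_trim_le (e m : ℕ) : coin (cyl (trim e m)) ≤ 2⁻¹ ^ m := by
  have hcyl : cyl (trim e m) = ⋃ t : {t // Fits m (stage e t)}, cyl {b | b ∈ stage e t} := by
    rw [← cyl_iUnion]
    congr 1
    ext b
    simp [trim]
  have hmono : Monotone fun t : {t // Fits m (stage e t)} => cyl {b | b ∈ stage e t} :=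
    fun _ _ h => cyl_mono fun _ => stage_subset_stage h
  rw [hcyl, hmono.directed_le.measure_iUnion]
  exact iSup_le fun t => fits_iff.1 t.2

lemma trim_eq_W {e m : ℕ} (h : coin (cyl (W e)) ≤ 2⁻¹ ^ m) : trim e m = W e := by
  ext b
  constructor
  · rintro ⟨t, -, hb⟩
    exact mem_W_iff_exists_stage.2 ⟨t, hb⟩
  · intro hb
    obtain ⟨t, hbt⟩ := mem_W_iff_exists_stage.1 hb
    refine ⟨t, fits_iff.2 ((measure_mono (cyl_mono fun b' hb' => ?_)).trans h), hbt⟩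
    exact mem_W_iff_exists_stage.2 ⟨t, hb'⟩

def universalLevel (n : ℕ) : Set (List Bool) :=
  ⋃ e, ⋃ v ∈ (ofNat Code e).eval (e + n + 1), trim v (e + n + 1)

lemma coin_cyl_biUnion_part_le {p : Part ℕ} {S : ℕ → Set (List Bool)} {c : ℝ≥0∞}
    (h : ∀ v, coin (cyl (S v)) ≤ c) : coin (cyl (⋃ v ∈ p, S v)) ≤ c := by
  by_cases hp : p.Dom
  · refine (measure_mono (cyl_mono (iUnion₂_subset fun v hv => ?_))).trans (h (p.get hp))
    rw [Part.mem_unique hv (Part.get_mem hp)]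
  · have hnot : ∀ v, v ∉ p := fun v hv => hp (Part.dom_iff_mem.2 ⟨v, hv⟩)
    simp [hnot, cyl]

lemma tsum_inv_two_pow_add_succ (n : ℕ) : ∑' e : ℕ, (2⁻¹ : ℝ≥0∞) ^ (e + n + 1) = 2⁻¹ ^ n := by
  calc ∑' e : ℕ, (2⁻¹ : ℝ≥0∞) ^ (e + n + 1) = (∑' e : ℕ, (2⁻¹ : ℝ≥0∞) ^ (e + 1)) * 2⁻¹ ^ n := by
        rw [← ENNReal.tsum_mul_right]
        simp only [← pow_add, add_right_comm]
    _ = 2⁻¹ ^ n := by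
        rw [ENNReal.tsum_geometric_add_one, ENNReal.one_sub_inv_two, inv_inv,
          ENNReal.inv_mul_cancel two_ne_zero ENNReal.ofNat_ne_top, one_mul]

lemma coin_cyl_universalLevel_le (n : ℕ) : coin (cyl (universalLevel n)) ≤ 2⁻¹ ^ n := by
  rw [universalLevel, cyl_iUnion, ← tsum_inv_two_pow_add_succ n]
  exact (measure_iUnion_le _).trans
    (ENNReal.tsum_le_tsum fun e => coin_cyl_biUnion_part_le fun v => coin_cyl_trim_le v _)

lemma cyl_W_subset_cyl_universalLevel {g : ℕ → ℕ} (hg : MLTest g) :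
    ∃ e, ∀ n, cyl (W (g (e + n + 1))) ⊆ cyl (universalLevel n) := by
  obtain ⟨c, hc⟩ := Code.exists_code.1 (Partrec.nat_iff.1 hg.1.partrec)
  refine ⟨encode c, fun n => cyl_mono ?_⟩
  rw [← trim_eq_W (hg.2 _)]
  refine subset_iUnion_of_subset (encode c)
    (subset_iUnion₂_of_subset (g (encode c + n + 1)) ?_ le_rfl)
  simp [hc]

lemma primrec_allStrings : Primrec allStrings := by
  have hcons (d : Bool) : Primrec₂ fun (_ : ℕ × List (List Bool)) (s : List Bool) => d :: s :=
    (Primrec.list_cons.comp (Primrec.const d) Primrec.snd).to₂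
  have hstep : Primrec₂ fun (_ : ℕ) (l : List (List Bool)) =>
      l.map (false :: ·) ++ l.map (true :: ·) :=
    (Primrec.list_append.comp (Primrec.list_map Primrec.snd (hcons false))
      (Primrec.list_map Primrec.snd (hcons true))).to₂
  refine (Primrec.nat_rec₁ [[]] hstep).of_eq fun n => ?_
  induction n with
  | zero => rfl
  | succ n ih => simp only [allStrings, ← ih]

lemma primrecRel_isPrefix : PrimrecRel fun a b : List Bool => a <+: b :=
  (Primrec.eq.comp (Primrec.list_take.comp (Primrec.list_length.comp Primrec.fst) Primrec.snd)
    Primrec.fst).of_eq fun _ => (List.prefix_iff_eq_take.trans eq_comm).symm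

lemma primrec_extensions : Primrec₂ extensions :=
  ((primrecRel_isPrefix.exists_mem_list.swap.listFilter).comp
    (primrec_allStrings.comp Primrec.snd) Primrec.fst).to₂

lemma primrec_lengthSum : Primrec lengthSum :=
  (Primrec.list_foldr (Primrec.list_map Primrec.id (Primrec.list_length.comp Primrec.snd).to₂)
    (Primrec.const 0) (Primrec.nat_add.comp (Primrec.fst.comp Primrec.snd)
      (Primrec.snd.comp Primrec.snd)).to₂).of_eq fun _ => List.sum_eq_foldr.symm

lemma primrecRel_fits : PrimrecRel Fits := by
  have hpow : Primrec fun k : ℕ => 2 ^ k :=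
    (Primrec₂.unpaired'.1 Nat.Primrec.pow).comp (Primrec.const 2) Primrec.id
  have hD : Primrec fun q : ℕ × List (List Bool) => lengthSum q.2 :=
    primrec_lengthSum.comp Primrec.snd
  exact Primrec.nat_le.comp
    (Primrec.nat_mul.comp (Primrec.list_length.comp (primrec_extensions.comp Primrec.snd hD))
      (hpow.comp Primrec.fst))
    (hpow.comp hD)

lemma primrec_stage : Primrec₂ stage := by
  have hhalt : PrimrecRel fun (k : ℕ) (q : ℕ × ℕ) =>
      (Code.evaln q.2 (ofNat Code q.1) k).isSome = true :=
    Primrec.eq.comp (Primrec.option_isSome.comp (Code.primrec_evaln.comp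
      (Primrec.pair (Primrec.pair (Primrec.snd.comp Primrec.snd)
        ((Primrec.ofNat Code).comp (Primrec.fst.comp Primrec.snd))) Primrec.fst)))
      (Primrec.const true)
  refine (Primrec.listFilterMap (hhalt.listFilter.comp (Primrec.list_range.comp Primrec.snd)
    Primrec.id) (Primrec.decode₂.comp Primrec.snd).to₂).to₂.of_eq fun e t => ?_
  simp [stage]

/-- The search behind `universalLevel`: the `e`-th candidate test halts within `s` steps on
level `e + n + 1`, and after `t` steps its enumeration contains `k` and still fits. -/
def levelSearch (n k e s t : ℕ) : Bool :=
  (Code.evaln s (ofNat Code e) (e + n + 1)).any fun v =>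
    (Code.evaln t (ofNat Code v) k).isSome && decide (Fits (e + n + 1) (stage v t))

lemma mem_universalLevel_iff {n : ℕ} {b : List Bool} :
    b ∈ universalLevel n ↔ ∃ e s t, levelSearch n (encode b) e s t = true := by
  simp only [universalLevel, trim, levelSearch, mem_iUnion, mem_ofPred_eq, Option.any_eq_true,
    Bool.and_eq_true, decide_eq_true_eq, ← mem_stage, Code.evaln_complete, ← Option.mem_def]
  constructor
  · rintro ⟨e, v, ⟨s, hs⟩, t, hfits, hb⟩
    exact ⟨e, s, t, v, hs, hb, hfits⟩
  · rintro ⟨e, s, t, v, hs, hb, hfits⟩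
    exact ⟨e, v, ⟨s, hs⟩, t, hfits, hb⟩

lemma primrec_levelSearch :
    Primrec fun q : ℕ × ℕ × ℕ × ℕ × ℕ => levelSearch q.1 q.2.1 q.2.2.1 q.2.2.2.1 q.2.2.2.2 := by
  have hk : Primrec fun q : ℕ × ℕ × ℕ × ℕ × ℕ => q.2.1 := Primrec.fst.comp Primrec.snd
  have he : Primrec fun q : ℕ × ℕ × ℕ × ℕ × ℕ => q.2.2.1 :=
    Primrec.fst.comp (Primrec.snd.comp Primrec.snd)
  have hs : Primrec fun q : ℕ × ℕ × ℕ × ℕ × ℕ => q.2.2.2.1 :=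
    Primrec.fst.comp (Primrec.snd.comp (Primrec.snd.comp Primrec.snd))
  have ht : Primrec fun q : ℕ × ℕ × ℕ × ℕ × ℕ => q.2.2.2.2 :=
    Primrec.snd.comp (Primrec.snd.comp (Primrec.snd.comp Primrec.snd))
  have hm : Primrec fun q : ℕ × ℕ × ℕ × ℕ × ℕ => q.2.2.1 + q.1 + 1 :=
    Primrec.succ.comp (Primrec.nat_add.comp he Primrec.fst)
  have hcode : Primrec (ofNat Code) := Primrec.ofNat Code
  have hev : Primrec fun q : ℕ × ℕ × ℕ × ℕ × ℕ =>
      Code.evaln q.2.2.2.1 (ofNat Code q.2.2.1) (q.2.2.1 + q.1 + 1) :=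
    Code.primrec_evaln.comp ((hs.pair (hcode.comp he)).pair hm)
  have hcheck : Primrec₂ fun (q : ℕ × ℕ × ℕ × ℕ × ℕ) (v : ℕ) =>
      (Code.evaln q.2.2.2.2 (ofNat Code v) q.2.1).isSome &&
        decide (Fits (q.2.2.1 + q.1 + 1) (stage v q.2.2.2.2)) :=
    (Primrec.and.comp
      (Primrec.option_isSome.comp (Code.primrec_evaln.comp
        (((ht.comp Primrec.fst).pair (hcode.comp Primrec.snd)).pair (hk.comp Primrec.fst))))
      (primrecRel_fits.decide.comp (hm.comp Primrec.fst)
        (primrec_stage.comp Primrec.snd (ht.comp Primrec.fst)))).to₂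
  refine (Primrec.option_casesOn hev (Primrec.const false) hcheck).of_eq fun q => ?_
  simp only [levelSearch]
  cases Code.evaln q.2.2.2.1 (ofNat Code q.2.2.1) (q.2.2.1 + q.1 + 1) <;> rfl

lemma exists_computable_W_iff {P : ℕ → ℕ → ℕ → Bool}
    (hP : Primrec fun q : ℕ × ℕ × ℕ => P q.1 q.2.1 q.2.2) :
    ∃ f : ℕ → ℕ, Computable f ∧ ∀ n b, b ∈ W (f n) ↔ ∃ w, P n (encode b) w = true := by
  have hsearch : Partrec fun z : ℕ => Nat.rfind fun w => Part.some (P z.unpair.1 z.unpair.2 w) :=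
    Partrec.rfind (hP.comp ((Primrec.fst.comp (Primrec.unpair.comp Primrec.fst)).pair
      ((Primrec.snd.comp (Primrec.unpair.comp Primrec.fst)).pair Primrec.snd))).to_comp.partrec
  obtain ⟨c, hc⟩ := Code.exists_code.1 (Partrec.nat_iff.1 hsearch)
  refine ⟨fun n => encode (c.curry n),
    (Primrec.encode.comp (Code.primrec₂_curry.comp (Primrec.const c) Primrec.id)).to_comp,
    fun n b => ?_⟩
  simp only [W, mem_ofPred_eq, ofNat_encode, Code.eval_curry, hc, Nat.unpair_pair]
  exact Nat.rfind_dom.trans ⟨fun ⟨w, hw, _⟩ => ⟨w, (Part.mem_some_iff.1 hw).symm⟩,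
    fun ⟨w, hw⟩ => ⟨w, Part.mem_some_iff.2 hw.symm, fun _ => trivial⟩⟩

lemma exists_computable_W_eq_universalLevel :
    ∃ f : ℕ → ℕ, Computable f ∧ ∀ n, W (f n) = universalLevel n := by
  have hunpair : Primrec fun q : ℕ × ℕ × ℕ =>
      (q.1, q.2.1, q.2.2.unpair.1, q.2.2.unpair.2.unpair.1, q.2.2.unpair.2.unpair.2) := by
    have hw : Primrec fun q : ℕ × ℕ × ℕ => q.2.2.unpair :=
      Primrec.unpair.comp (Primrec.snd.comp Primrec.snd)
    have hw' : Primrec fun q : ℕ × ℕ × ℕ => q.2.2.unpair.2.unpair :=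
      Primrec.unpair.comp (Primrec.snd.comp hw)
    exact Primrec.fst.pair ((Primrec.fst.comp Primrec.snd).pair ((Primrec.fst.comp hw).pair
      ((Primrec.fst.comp hw').pair (Primrec.snd.comp hw'))))
  have hP : Primrec fun q : ℕ × ℕ × ℕ => levelSearch q.1 q.2.1 q.2.2.unpair.1
      q.2.2.unpair.2.unpair.1 q.2.2.unpair.2.unpair.2 := primrec_levelSearch.comp hunpair
  obtain ⟨f, hf, hW⟩ := exists_computable_W_iff (P := fun n k w =>
    levelSearch n k w.unpair.1 w.unpair.2.unpair.1 w.unpair.2.unpair.2) hP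
  refine ⟨f, hf, fun n => ext fun b => (hW n b).trans ?_⟩
  rw [mem_universalLevel_iff]
  constructor
  · rintro ⟨w, hw⟩
    exact ⟨w.unpair.1, w.unpair.2.unpair.1, w.unpair.2.unpair.2, hw⟩
  · rintro ⟨e, s, t, h⟩
    exact ⟨Nat.pair e (Nat.pair s t), by simpa using h⟩

/-- There exists a universal Martin-Löf test. -/
theorem stmt17 :
    ∃ f : ℕ → ℕ, MLTest f ∧
      ∀ (x : ℕ → Bool) (g : ℕ → ℕ), MLTest g → Fails x g → Fails x f := by
  obtain ⟨f, hf, hW⟩ := exists_computable_W_eq_universalLevel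
  refine ⟨f, ⟨hf, fun n => hW n ▸ coin_cyl_universalLevel_le n⟩, fun x g hg hx n => ?_⟩
  obtain ⟨e, he⟩ := cyl_W_subset_cyl_universalLevel hg
  exact hW n ▸ he n (hx _)
end
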